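/- arXiv:2604.12915 — 3 statements merged into one kernel-verified Lean document; each statement's English description precedes it below -/
import Mathlib

section
/- Let G be a countable abelian group, H a Hilbert space, (U^g)_{g∈G} a unitary representation, and p, q ultrafilters on G. Then U^{p+q} = U^p ∘ U^q, where p+q is the ultrafilter sum defined by A ∈ p+q iff {g : −g+A ∈ q} ∈ p, and the operator limits are taken in the weak operator topology. In particular the operators {U^p : p ∈ βG} commute pairwise. -/
/-!
Since `p + q` is the iterated limit "first `h → q`, then `g → p`" of `g + h`, and
`U (g + h) = U g ∘ U h`, it suffices that `U g ∘ U h → U g ∘ Uq` weakly for fixed `g`, which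
holds because `⟪f, U g x⟫ = ⟪(U g)† f, x⟫`. For commutativity: every `U h` commutes with
all `U g`, hence with their weak limit `Vr`; so `Vr` commutes with all `U h`, hence with `Vs`.
-/

open Filter ContinuousLinearMap Topology

/-- `V` is the weak-operator-topology limit of the operators `U g` along the
ultrafilter `p`. -/
def IsWOTLimit {G : Type*} {H : Type*} [NormedAddCommGroup H] [InnerProductSpace ℂ H]
    (U : G → (H →L[ℂ] H)) (p : Ultrafilter G) (V : H →L[ℂ] H) : Prop :=
  ∀ f f' : H,
    Filter.Tendsto (fun g => (inner ℂ f (U g f') : ℂ)) (p : Filter G)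
      (nhds (inner ℂ f (V f')))

/-- The sum `p + q` of two ultrafilters on an additive group:
`A ∈ p + q ↔ {g | −g + A ∈ q} ∈ p`. -/
def ultraAdd {G : Type*} [AddCommGroup G] (p q : Ultrafilter G) : Ultrafilter G :=
  p.bind fun g => q.map fun h => g + h

theorem Filter.tendsto_bind_of_tendsto_nhds {α β X : Type*} [TopologicalSpace X]
    {p : Filter α} {m : α → Filter β} {φ : β → X} {c : α → X} {L : X}
    (hc : Tendsto c p (𝓝 L)) (hφ : ∀ a, Tendsto φ (m a) (𝓝 (c a))) :
    Tendsto φ (p.bind m) (𝓝 L) := fun _ hs =>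
  eventually_bind.2 <| (hc.eventually (eventually_mem_nhds_iff.2 hs)).mono fun a ha => hφ a ha

theorem commute_of_map_add {G M : Type*} [AddCommMagma G] [Mul M] {U : G → M}
    (hrep : ∀ g h : G, U (g + h) = U g * U h) (g h : G) : Commute (U g) (U h) := by
  rw [Commute, SemiconjBy, ← hrep, ← hrep, add_comm]

namespace IsWOTLimit

variable {G H : Type*} [NormedAddCommGroup H] [InnerProductSpace ℂ H]
  {U : G → (H →L[ℂ] H)} {p : Ultrafilter G} {V : H →L[ℂ] H}

theorem unique {W : H →L[ℂ] H} (hV : IsWOTLimit U p V) (hW : IsWOTLimit U p W) : V = W :=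
  ext fun f' => ext_inner_left ℂ fun f => tendsto_nhds_unique (hV f f') (hW f f')

variable [CompleteSpace H]

theorem tendsto_inner_apply (hV : IsWOTLimit U p V) (A : H →L[ℂ] H) (f f' : H) :
    Tendsto (fun g => inner ℂ f (A (U g f'))) p (𝓝 (inner ℂ f (A (V f')))) := by
  simpa only [adjoint_inner_left] using hV (adjoint A f) f'

theorem commute {A : H →L[ℂ] H} (hV : IsWOTLimit U p V) (hA : ∀ g, Commute A (U g)) :
    Commute A V := by
  refine ext fun f' => ext_inner_left ℂ fun f => tendsto_nhds_unique
    (hV.tendsto_inner_apply A f f') ?_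
  have hswap : ∀ g, A (U g f') = U g (A f') := fun g => congrArg (· f') (hA g).eq
  simp only [hswap]
  exact hV f (A f')

theorem ultraAdd [AddCommGroup G] (hrep : ∀ g h : G, U (g + h) = U g ∘L U h)
    {q : Ultrafilter G} {Up Uq : H →L[ℂ] H} (hUp : IsWOTLimit U p Up)
    (hUq : IsWOTLimit U q Uq) : IsWOTLimit U (ultraAdd p q) (Up ∘L Uq) := fun f f' =>
  tendsto_bind_of_tendsto_nhds (hUp f (Uq f')) fun g => by
    simpa only [Ultrafilter.coe_map, tendsto_map'_iff, Function.comp_def, hrep, comp_apply] using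
      hUq.tendsto_inner_apply (U g) f f'

end IsWOTLimit

theorem stmt_8_general {G : Type*} [AddCommGroup G]
    {H : Type*} [NormedAddCommGroup H] [InnerProductSpace ℂ H] [CompleteSpace H]
    (U : G → (H →L[ℂ] H))
    (hrep : ∀ g h : G, U (g + h) = U g ∘L U h)
    (p q : Ultrafilter G) (Up Uq Upq : H →L[ℂ] H)
    (hUp : IsWOTLimit U p Up) (hUq : IsWOTLimit U q Uq)
    (hUpq : IsWOTLimit U (ultraAdd p q) Upq) :
    Upq = Up ∘L Uq ∧
      ∀ (r s : Ultrafilter G) (Vr Vs : H →L[ℂ] H),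
        IsWOTLimit U r Vr → IsWOTLimit U s Vs → Vr ∘L Vs = Vs ∘L Vr := by
  refine ⟨hUpq.unique (hUp.ultraAdd hrep hUq), fun r s Vr Vs hVr hVs => ?_⟩
  have hUr : ∀ h, Commute Vr (U h) := fun h =>
    (hVr.commute fun g => commute_of_map_add hrep h g).symm
  exact hVs.commute hUr

/-- For a unitary representation of a countable abelian group,
`U^{p+q} = U^p ∘ U^q` (weak-operator ultrafilter limits); in particular all the
operators `U^p`, `p ∈ βG`, commute pairwise. -/
theorem stmt_8 {G : Type*} [AddCommGroup G] [Countable G]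
    {H : Type*} [NormedAddCommGroup H] [InnerProductSpace ℂ H] [CompleteSpace H]
    (U : G → (H →L[ℂ] H))
    (hrep : ∀ g h : G, U (g + h) = U g ∘L U h) (hzero : U 0 = 1)
    (hunit : ∀ g : G,
      ContinuousLinearMap.adjoint (U g) ∘L U g = 1 ∧
        U g ∘L ContinuousLinearMap.adjoint (U g) = 1)
    (p q : Ultrafilter G) (Up Uq Upq : H →L[ℂ] H)
    (hUp : IsWOTLimit U p Up) (hUq : IsWOTLimit U q Uq)
    (hUpq : IsWOTLimit U (ultraAdd p q) Upq) :
    Upq = Up ∘L Uq ∧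
      ∀ (r s : Ultrafilter G) (Vr Vs : H →L[ℂ] H),
        IsWOTLimit U r Vr → IsWOTLimit U s Vs → Vr ∘L Vs = Vs ∘L Vr :=
  stmt_8_general U hrep p q Up Uq Upq hUp hUq hUpq
end

section
/- Let G be a countable abelian group, H a Hilbert space, (U^g) a unitary representation, and p an ultrafilter on G. If f ∈ H and there exists a finite set F ⊆ G and ε > 0 such that {g ∈ G : ∃ h ∈ F, ‖U^g f − U^h f‖ ≤ ε} ∈ p, then there exists h ∈ F with ‖U^p f − U^h f‖ ≤ ε. Consequently, if the orbit {U^g f : g ∈ G} is norm precompact, then ‖U^p f‖ = ‖f‖. -/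
/-!
A weak limit `w` of vectors `v i` lies in every closed ball `‖· - y‖ ≤ ε` that eventually
contains the `v i`: pairing `v i - y` with `w - y` and passing to the limit gives
`‖w - y‖² ≤ ε ‖w - y‖`. An ultrafilter picks one ball out of finitely many. If the orbit is
precompact, finitely many small balls centred on it cover it, so `U^p f` lies in the closure of
the orbit, which is contained in the sphere of radius `‖f‖`.
-/

open Filter Topology Set

theorem TotallyBounded.exists_finset_forall_dist_lt {ι α : Type*} [PseudoMetricSpace α]
    {v : ι → α} (hv : TotallyBounded (range v)) {ε : ℝ} (hε : 0 < ε) :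
    ∃ F : Finset ι, ∀ i, ∃ j ∈ F, dist (v i) (v j) < ε := by
  obtain ⟨t, htv, htfin, hcover⟩ := Metric.finite_approx_of_totallyBounded hv ε hε
  rw [← image_univ] at htv hcover
  obtain ⟨s, -, hsfin, hcover⟩ :=
    exists_subset_image_finite_and (p := fun t => v '' univ ⊆ ⋃ y ∈ t, Metric.ball y ε)
      |>.mp ⟨t, htv, htfin, hcover⟩
  refine ⟨hsfin.toFinset, fun i => ?_⟩
  simpa using hcover (mem_image_of_mem v (mem_univ i))

section WeakLimit

variable {𝕜 E ι : Type*} [RCLike 𝕜] [NormedAddCommGroup E] [InnerProductSpace 𝕜 E]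
  {l : Filter ι} {v : ι → E} {w : E}

local notation "⟪" x ", " y "⟫" => inner 𝕜 x y

theorem norm_sub_le_of_tendsto_inner [l.NeBot]
    (hw : ∀ z, Tendsto (fun i => ⟪z, v i⟫) l (𝓝 ⟪z, w⟫)) {y : E} {ε : ℝ}
    (hε : ∀ᶠ i in l, ‖v i - y‖ ≤ ε) : ‖w - y‖ ≤ ε := by
  have hε₀ : 0 ≤ ε := hε.exists.elim fun i hi => (norm_nonneg _).trans hi
  have hlim : Tendsto (fun i => ⟪w - y, v i - y⟫) l (𝓝 ⟪w - y, w - y⟫) := by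
    simp_rw [inner_sub_right]
    exact (hw (w - y)).sub_const _
  have hsq : ‖w - y‖ ^ 2 ≤ ‖w - y‖ * ε := by
    have : ‖⟪w - y, w - y⟫‖ = ‖w - y‖ ^ 2 := by
      rw [inner_self_eq_norm_sq_to_K, norm_pow, RCLike.norm_ofReal, abs_norm]
    rw [← this]
    refine le_of_tendsto hlim.norm (hε.mono fun i hi => ?_)
    exact (norm_inner_le_norm _ _).trans (by gcongr)
  nlinarith [norm_nonneg (w - y)]

theorem Ultrafilter.exists_norm_sub_le_of_tendsto_inner {p : Ultrafilter ι}
    (hw : ∀ z, Tendsto (fun i => ⟪z, v i⟫) p (𝓝 ⟪z, w⟫)) {F : Finset ι} {ε : ℝ}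
    (hF : {i | ∃ j ∈ F, ‖v i - v j‖ ≤ ε} ∈ p) : ∃ j ∈ F, ‖w - v j‖ ≤ ε := by
  have hF' : (⋃ j ∈ (F : Set ι), {i | ‖v i - v j‖ ≤ ε}) ∈ p := by
    simpa only [mem_iUnion, exists_prop, Finset.mem_coe, ← ofPred_exists] using hF
  obtain ⟨j, hj, hjε⟩ := (Ultrafilter.finite_biUnion_mem_iff F.finite_toSet).mp hF'
  exact ⟨j, hj, norm_sub_le_of_tendsto_inner hw hjε⟩

theorem mem_closure_range_of_tendsto_inner (hv : TotallyBounded (range v)) {p : Ultrafilter ι}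
    (hw : ∀ z, Tendsto (fun i => ⟪z, v i⟫) p (𝓝 ⟪z, w⟫)) : w ∈ closure (range v) := by
  refine Metric.mem_closure_iff.mpr fun ε hε => ?_
  obtain ⟨F, hF⟩ := hv.exists_finset_forall_dist_lt (half_pos hε)
  have hcover : {i | ∃ j ∈ F, ‖v i - v j‖ ≤ ε / 2} ∈ p :=
    univ_mem' fun i => (hF i).imp fun j ⟨hj, hij⟩ => ⟨hj, (dist_eq_norm (v i) (v j) ▸ hij).le⟩
  obtain ⟨j, -, hj⟩ := p.exists_norm_sub_le_of_tendsto_inner hw hcover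
  exact ⟨v j, mem_range_self j, by rw [dist_eq_norm]; linarith⟩

end WeakLimit

theorem stmt_10_general {G : Type*}
    {H : Type*} [NormedAddCommGroup H] [InnerProductSpace ℂ H] [CompleteSpace H]
    (U : G → (H →L[ℂ] H))
    (hunit : ∀ g : G,
      ContinuousLinearMap.adjoint (U g) ∘L U g = 1 ∧
        U g ∘L ContinuousLinearMap.adjoint (U g) = 1)
    (p : Ultrafilter G) (Up : H →L[ℂ] H) (hUp : IsWOTLimit U p Up) (f : H) :
    (∀ (F : Finset G) (ε : ℝ), 0 < ε →
        {g : G | ∃ h ∈ F, ‖U g f - U h f‖ ≤ ε} ∈ p →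
        ∃ h ∈ F, ‖Up f - U h f‖ ≤ ε) ∧
      (TotallyBounded (Set.range fun g => U g f) → ‖Up f‖ = ‖f‖) := by
  have hw : ∀ z, Tendsto (fun g => inner ℂ z (U g f)) p (𝓝 (inner ℂ z (Up f))) :=
    fun z => hUp z f
  refine ⟨fun F ε _ hF => p.exists_norm_sub_le_of_tendsto_inner hw hF, fun hbdd => ?_⟩
  have hsphere : range (fun g => U g f) ⊆ Metric.sphere 0 ‖f‖ := by
    rintro _ ⟨g, rfl⟩
    simpa using (U g).norm_map_iff_adjoint_comp_self.mpr (hunit g).1 f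
  simpa using closure_minimal hsphere Metric.isClosed_sphere
    (mem_closure_range_of_tendsto_inner hbdd hw)

/-- For a unitary representation `U` of a countable abelian group on a complex
Hilbert space, an ultrafilter `p` and `f ∈ H`: if for a finite set `F` and `ε > 0`
the set `{g | ∃ h ∈ F, ‖U^g f − U^h f‖ ≤ ε}` belongs to `p`, then there is `h ∈ F`
with `‖U^p f − U^h f‖ ≤ ε`.  Consequently, if the orbit `{U^g f}` is norm
precompact, then `‖U^p f‖ = ‖f‖`. -/
theorem stmt_10 {G : Type*} [AddCommGroup G] [Countable G]
    {H : Type*} [NormedAddCommGroup H] [InnerProductSpace ℂ H] [CompleteSpace H]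
    (U : G → (H →L[ℂ] H))
    (hrep : ∀ g h : G, U (g + h) = U g ∘L U h) (hzero : U 0 = 1)
    (hunit : ∀ g : G,
      ContinuousLinearMap.adjoint (U g) ∘L U g = 1 ∧
        U g ∘L ContinuousLinearMap.adjoint (U g) = 1)
    (p : Ultrafilter G) (Up : H →L[ℂ] H) (hUp : IsWOTLimit U p Up) (f : H) :
    (∀ (F : Finset G) (ε : ℝ), 0 < ε →
        {g : G | ∃ h ∈ F, ‖U g f - U h f‖ ≤ ε} ∈ p →
        ∃ h ∈ F, ‖Up f - U h f‖ ≤ ε) ∧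
      (TotallyBounded (Set.range fun g => U g f) → ‖Up f‖ = ‖f‖) :=
  stmt_10_general U hunit p Up hUp f
end

section
/- Let G be a countable abelian group, H a Hilbert space, (U^g) a unitary representation, and let (g_k) be a sequence in G tending to infinity (leaving every finite set). Suppose f ∈ H satisfies U^{g_k} f → f weakly. Then there exists a nonprincipal idempotent ultrafilter p on G with U^p f = f. -/
/-!
The ultrafilters `p` with `U^p f = f` are exactly those along which `U^g f → f` weakly. Being a
limit condition, this cuts out a closed subset of `βG`; and since `U^{g+h} f = U^g (U^h f)` and
`U^g` is weakly continuous, it is stable under `p + q`. Intersecting with the (closed, additively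
stable) set of nonprincipal ultrafilters gives a closed subsemigroup of `βG`, which is nonempty
because any ultrafilter refining `(g_k)` lies in it. The Ellis–Numakura lemma then produces an
idempotent in it.
-/

open Filter Topology

attribute [local instance] Ultrafilter.add Ultrafilter.addSemigroup

namespace Ultrafilter

variable {α : Type*}

lemma isClosed_setOf_le (l : Filter α) :
    IsClosed {p : Ultrafilter α | (p : Filter α) ≤ l} := by
  simp only [Filter.le_def, Set.ofPred_forall]
  exact isClosed_biInter fun s _ => ultrafilter_isClosed_basic s

lemma isClosed_setOf_tendsto {β : Type*} (u : α → β) (l : Filter β) :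
    IsClosed {p : Ultrafilter α | Tendsto u (p : Filter α) l} := by
  simpa only [tendsto_iff_comap] using isClosed_setOf_le (l.comap u)

lemma ne_pure_of_le_cofinite {p : Ultrafilter α} (hp : (p : Filter α) ≤ cofinite) (x : α) :
    p ≠ pure x := by
  rintro rfl
  simpa using hp (Set.finite_singleton x).compl_mem_cofinite

variable {M : Type*} [Add M]

lemma add_le_cofinite [IsLeftCancelAdd M] (p : Ultrafilter M) {q : Ultrafilter M}
    (hq : (q : Filter M) ≤ cofinite) : ((p + q : Ultrafilter M) : Filter M) ≤ cofinite :=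
  fun s hs =>
    (eventually_add p q (· ∈ s)).2 <| Eventually.of_forall fun g =>
      hq ((add_right_injective g).tendsto_cofinite hs)

lemma tendsto_add {X : Type*} [TopologicalSpace X] {F F' : M → X} {p q : Ultrafilter M} {x : X}
    (hF : ∀ g, Tendsto (fun h => F (g + h)) ↑q (𝓝 (F' g))) (hF' : Tendsto F' ↑p (𝓝 x)) :
    Tendsto F ↑(p + q) (𝓝 x) := fun s hs =>
  (eventually_add p q (fun m => F m ∈ s)).2 <|
    (hF'.eventually (eventually_mem_nhds_iff.2 hs)).mono fun g hg => hF g hg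

end Ultrafilter

lemma ultraAdd_eq_add {G : Type*} [AddCommGroup G] (p q : Ultrafilter G) :
    ultraAdd p q = p + q :=
  Ultrafilter.coe_inj.mp rfl

section WeakConvergence

variable {α : Type*} {H : Type*} [NormedAddCommGroup H] [InnerProductSpace ℂ H]

def WeakTendsto (u : α → H) (l : Filter α) (v : H) : Prop :=
  ∀ f' : H, Tendsto (fun a => inner ℂ f' (u a)) l (𝓝 (inner ℂ f' v))

lemma WeakTendsto.mono_left {u : α → H} {l l' : Filter α} {v : H} (h : WeakTendsto u l v)
    (hl : l' ≤ l) : WeakTendsto u l' v := fun f' => (h f').mono_left hl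

lemma weakTendsto_map_iff {β : Type*} {u : α → H} {φ : β → α} {l : Filter β} {v : H} :
    WeakTendsto u (map φ l) v ↔ WeakTendsto (u ∘ φ) l v :=
  forall_congr' fun _ => tendsto_map'_iff

lemma WeakTendsto.clm_comp [CompleteSpace H] {u : α → H} {l : Filter α} {v : H}
    (h : WeakTendsto u l v) (T : H →L[ℂ] H) : WeakTendsto (fun a => T (u a)) l (T v) := by
  intro f'
  simp only [← ContinuousLinearMap.adjoint_inner_left]
  exact h _

lemma Ultrafilter.isClosed_setOf_weakTendsto (u : α → H) (v : H) :
    IsClosed {p : Ultrafilter α | WeakTendsto u ↑p v} := by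
  simp only [WeakTendsto, Set.ofPred_forall]
  exact isClosed_iInter fun f' => Ultrafilter.isClosed_setOf_tendsto _ _

lemma IsWOTLimit.apply_eq_iff {G : Type*} {U : G → H →L[ℂ] H} {p : Ultrafilter G}
    {V : H →L[ℂ] H} (hV : IsWOTLimit U p V) (f v : H) :
    V f = v ↔ WeakTendsto (fun g => U g f) ↑p v := by
  refine ⟨fun h f' => h ▸ hV f' f, fun h => ext_inner_left ℂ fun f' => ?_⟩
  exact tendsto_nhds_unique (hV f' f) (h f')

lemma weakTendsto_add [CompleteSpace H] {G : Type*} [Add G] {U : G → H →L[ℂ] H}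
    (hrep : ∀ g h : G, U (g + h) = U g ∘L U h) {f : H} {p q : Ultrafilter G}
    (hp : WeakTendsto (fun g => U g f) ↑p f) (hq : WeakTendsto (fun g => U g f) ↑q f) :
    WeakTendsto (fun g => U g f) ↑(p + q) f := fun f' =>
  Ultrafilter.tendsto_add
    (fun g => by simpa only [hrep, ContinuousLinearMap.comp_apply] using hq.clm_comp (U g) f')
    (hp f')

end WeakConvergence

theorem stmt_14_general {G : Type*} [AddCommGroup G]
    {H : Type*} [NormedAddCommGroup H] [InnerProductSpace ℂ H] [CompleteSpace H]
    (U : G → (H →L[ℂ] H))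
    (hrep : ∀ g h : G, U (g + h) = U g ∘L U h)
    (Ulim : Ultrafilter G → (H →L[ℂ] H))
    (hUlim : ∀ p : Ultrafilter G, IsWOTLimit U p (Ulim p))
    (gseq : ℕ → G) (hgseq : ∀ F : Finset G, {k : ℕ | gseq k ∈ F}.Finite)
    (f : H)
    (hrigid : ∀ f' : H,
      Filter.Tendsto (fun k => (inner ℂ f' (U (gseq k) f) : ℂ)) Filter.atTop
        (nhds (inner ℂ f' f))) :
    ∃ p : Ultrafilter G, (∀ x : G, p ≠ (pure x : Ultrafilter G)) ∧
      ultraAdd p p = p ∧ Ulim p f = f := by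
  set S : Set (Ultrafilter G) :=
    {p | (p : Filter G) ≤ cofinite ∧ WeakTendsto (fun g => U g f) ↑p f}
  have hS_closed : IsClosed S :=
    (Ultrafilter.isClosed_setOf_le _).inter (Ultrafilter.isClosed_setOf_weakTendsto _ _)
  have hS_add : ∀ p ∈ S, ∀ q ∈ S, p + q ∈ S := fun p hp q hq =>
    ⟨Ultrafilter.add_le_cofinite p hq.1, weakTendsto_add hrep hp.2 hq.2⟩
  have hgseq_cofinite : Tendsto gseq atTop cofinite := by
    rw [← Nat.cofinite_eq_atTop]
    refine Tendsto.cofinite_of_finite_preimage_singleton fun x => ?_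
    exact Set.finite_coe_iff.2 (by simpa [Set.preimage] using hgseq {x})
  have hS_nonempty : S.Nonempty := by
    set p₀ := Ultrafilter.of (map gseq atTop)
    have hp₀ : ↑p₀ ≤ map gseq atTop := Ultrafilter.of_le _
    have hp₀_rigid : WeakTendsto (fun g => U g f) ↑p₀ f :=
      (weakTendsto_map_iff (u := fun g => U g f).2 hrigid).mono_left hp₀
    exact ⟨p₀, hp₀.trans hgseq_cofinite, hp₀_rigid⟩
  obtain ⟨p, ⟨hp_cofinite, hp_rigid⟩, hpp⟩ := exists_idempotent_in_compact_add_subsemigroup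
    Ultrafilter.continuous_add_left S hS_nonempty hS_closed.isCompact hS_add
  exact ⟨p, Ultrafilter.ne_pure_of_le_cofinite hp_cofinite, (ultraAdd_eq_add p p).trans hpp,
    ((hUlim p).apply_eq_iff f f).2 hp_rigid⟩

/-- If `(g_k)` tends to infinity in the countable abelian group `G` (it leaves every
finite set) and `f ∈ H` is rigid along `(g_k)` (i.e. `U^{g_k} f → f` weakly), then
there is a nonprincipal idempotent ultrafilter `p` on `G` with `U^p f = f`. -/
theorem stmt_14 {G : Type*} [AddCommGroup G] [Countable G]
    {H : Type*} [NormedAddCommGroup H] [InnerProductSpace ℂ H] [CompleteSpace H]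
    (U : G → (H →L[ℂ] H))
    (hrep : ∀ g h : G, U (g + h) = U g ∘L U h) (hzero : U 0 = 1)
    (hunit : ∀ g : G,
      ContinuousLinearMap.adjoint (U g) ∘L U g = 1 ∧
        U g ∘L ContinuousLinearMap.adjoint (U g) = 1)
    (Ulim : Ultrafilter G → (H →L[ℂ] H))
    (hUlim : ∀ p : Ultrafilter G, IsWOTLimit U p (Ulim p))
    (gseq : ℕ → G) (hgseq : ∀ F : Finset G, {k : ℕ | gseq k ∈ F}.Finite)
    (f : H)
    (hrigid : ∀ f' : H,
      Filter.Tendsto (fun k => (inner ℂ f' (U (gseq k) f) : ℂ)) Filter.atTop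
        (nhds (inner ℂ f' f))) :
    ∃ p : Ultrafilter G, (∀ x : G, p ≠ (pure x : Ultrafilter G)) ∧
      ultraAdd p p = p ∧ Ulim p f = f :=
  stmt_14_general U hrep Ulim hUlim gseq hgseq f hrigid
end
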